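/- arXiv:0907.1884 — 8 statements merged into one kernel-verified Lean document; each statement's English description precedes it below -/
import Mathlib

section
/- Let ψ₁,…,ψ_m be unit vectors in ℂ^d, let p₁,…,p_m ≥ 0 with Σ p_k = 1, and let W₁,…,W_m > 0 be weights such that S := Σ_ℓ W_ℓ |ψ_ℓ⟩⟨ψ_ℓ| is positive definite on ℂ^d. Let G be the m×m complex matrix with entries G_{ij} = √(W_i W_j) ⟨ψ_i, ψ_j⟩ (which is positive semidefinite), and let G^{1/2} denote its unique positive semidefinite square root. Then the success probability of the Belavkin weighted square-root measurement with weights W_k satisfies Σ_k p_k ⟨ψ_k, M_k ψ_k⟩ = Σ_k (p_k / W_k) · (Re((G^{1/2})_{kk}))². -/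
/-!
Let `A` be the `d × m` matrix with columns `√W_k ψ_k`, so that `A Aᴴ = S` and `Aᴴ A = G`.
Then `B = Aᴴ S^{-1/2} A` is positive semidefinite and
`B² = Aᴴ S^{-1/2} (A Aᴴ) S^{-1/2} A = Aᴴ A = G`, so `B = G^{1/2}` by uniqueness of the square
root, and `(G^{1/2})_{kk} = W_k ⟨ψ_k, S^{-1/2} ψ_k⟩`. On the other hand
`⟨ψ_k, M_k ψ_k⟩ = W_k ⟨ψ_k, S^{-1/2} ψ_k⟩²`, where the inner product is real because
`S^{-1/2}` is Hermitian.
-/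

open Matrix Filter
open scoped ComplexOrder

noncomputable section

/-- The rank-one projector `|ψ⟩⟨ψ|` as a matrix. -/
def proj {d : ℕ} (ψ : Fin d → ℂ) : Matrix (Fin d) (Fin d) ℂ := vecMulVec ψ (star ψ)

/-- The (real) expectation value `⟨ψ, M ψ⟩`. -/
def expVal {d : ℕ} (M : Matrix (Fin d) (Fin d) ℂ) (ψ : Fin d → ℂ) : ℝ :=
  (star ψ ⬝ᵥ M *ᵥ ψ).re

/-- A POVM: a finite family of PSD matrices summing to the identity. -/
def IsPOVM {d m : ℕ} (M : Fin m → Matrix (Fin d) (Fin d) ℂ) : Prop :=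
  (∀ k, (M k).PosSemidef) ∧ ∑ k, M k = 1

/-- The positive semidefinite square root of a positive semidefinite matrix
(definition of Mathlib Dec 2024, since removed). -/
def Matrix.PosSemidef.sqrt {n 𝕜 : Type*} [Fintype n] [RCLike 𝕜] [DecidableEq n]
    {A : Matrix n n 𝕜} (hA : A.PosSemidef) : Matrix n n 𝕜 :=
  hA.1.eigenvectorUnitary.1 * diagonal ((↑) ∘ (√·) ∘ hA.1.eigenvalues) *
  (star hA.1.eigenvectorUnitary : Matrix n n 𝕜)

namespace Matrix

variable {n m 𝕜 : Type*} [Fintype n] [RCLike 𝕜]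

theorem conjTranspose_mul_mul_apply (A : Matrix n m 𝕜) (T : Matrix n n 𝕜) (i j : m) :
    (Aᴴ * T * A) i j = star (Aᵀ i) ⬝ᵥ T *ᵥ Aᵀ j := by
  rw [Matrix.mul_assoc]
  simp [mul_apply, dotProduct, mulVec]

variable [DecidableEq n]

section PosSemidefSqrt

open scoped MatrixOrder

theorem PosSemidef.sqrt_eq_cfc_sqrt {A : Matrix n n 𝕜} (hA : A.PosSemidef) :
    hA.sqrt = CFC.sqrt A := by
  rw [CFC.sqrt_eq_real_sqrt A hA.nonneg, cfcₙ_eq_cfc (hf0 := Real.sqrt_zero), hA.1.cfc_eq,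
    IsHermitian.cfc, Unitary.conjStarAlgAut_apply]
  rfl

theorem PosSemidef.posSemidef_sqrt {A : Matrix n n 𝕜} (hA : A.PosSemidef) :
    hA.sqrt.PosSemidef := by
  rw [hA.sqrt_eq_cfc_sqrt]
  exact (CFC.sqrt_nonneg A).posSemidef

theorem PosSemidef.sqrt_mul_self {A : Matrix n n 𝕜} (hA : A.PosSemidef) :
    hA.sqrt * hA.sqrt = A := by
  rw [hA.sqrt_eq_cfc_sqrt]
  exact CFC.sqrt_mul_sqrt_self A hA.nonneg

theorem PosSemidef.eq_sqrt_of_mul_self_eq {A B : Matrix n n 𝕜} (hA : A.PosSemidef)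
    (hB : B.PosSemidef) (h : B * B = A) : B = hA.sqrt := by
  rw [hA.sqrt_eq_cfc_sqrt]
  exact (CFC.sqrt_unique h hB.nonneg).symm

end PosSemidefSqrt

theorem PosDef.inv_sqrt_mul_mul_inv_sqrt {S : Matrix n n 𝕜} (hS : S.PosDef) :
    hS.posSemidef.sqrt⁻¹ * S * hS.posSemidef.sqrt⁻¹ = 1 := by
  set R := hS.posSemidef.sqrt
  have hRR : R * R = S := hS.posSemidef.sqrt_mul_self
  have hR : IsUnit R.det := isUnit_iff_ne_zero.mpr fun h => hS.det_pos.ne' <| by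
    rw [← hRR, det_mul, h, mul_zero]
  rw [← hRR, ← Matrix.mul_assoc, nonsing_inv_mul R hR, Matrix.one_mul, mul_nonsing_inv R hR]

theorem conjTranspose_mul_inv_sqrt_mul_eq_sqrt [Fintype m] [DecidableEq m] {A : Matrix n m 𝕜}
    {S : Matrix n n 𝕜} {G : Matrix m m 𝕜} (hS : S.PosDef) (hG : G.PosSemidef)
    (hAS : A * Aᴴ = S) (hAG : Aᴴ * A = G) :
    Aᴴ * hS.posSemidef.sqrt⁻¹ * A = hG.sqrt := by
  set T := hS.posSemidef.sqrt⁻¹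
  refine hG.eq_sqrt_of_mul_self_eq
    (hS.posSemidef.posSemidef_sqrt.inv.conjTranspose_mul_mul_same A) ?_
  calc Aᴴ * T * A * (Aᴴ * T * A) = Aᴴ * (T * (A * Aᴴ) * T) * A := by
        simp only [Matrix.mul_assoc]
    _ = G := by rw [hAS, hS.inv_sqrt_mul_mul_inv_sqrt, Matrix.mul_one, hAG]

end Matrix

theorem Complex.ofReal_sqrt_mul_self {w : ℝ} (hw : 0 ≤ w) :
    (Real.sqrt w : ℂ) * (Real.sqrt w : ℂ) = w := by
  rw [← Complex.ofReal_mul, Real.mul_self_sqrt hw]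

section Ensemble

variable {d : ℕ} {ι : Type*}

def frameMatrix (W : ι → ℝ) (ψ : ι → Fin d → ℂ) : Matrix (Fin d) ι ℂ :=
  Matrix.of fun i k => (Real.sqrt (W k) : ℂ) * ψ k i

theorem frameMatrix_transpose_apply (W : ι → ℝ) (ψ : ι → Fin d → ℂ) (k : ι) :
    (frameMatrix W ψ)ᵀ k = (Real.sqrt (W k) : ℂ) • ψ k :=
  rfl

theorem proj_mulVec (ψ u : Fin d → ℂ) : proj ψ *ᵥ u = (star ψ ⬝ᵥ u) • ψ := by
  ext i
  simp only [proj, mulVec, dotProduct, vecMulVec_apply, Pi.smul_apply, smul_eq_mul,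
    Finset.sum_mul]
  exact Finset.sum_congr rfl fun j _ => by ring

theorem expVal_mul_smul_proj_mul {T : Matrix (Fin d) (Fin d) ℂ} (hT : T.IsHermitian) (c : ℝ)
    (ψ : Fin d → ℂ) : expVal (T * (c • proj ψ) * T) ψ = c * (star ψ ⬝ᵥ T *ᵥ ψ).re ^ 2 := by
  set q := star ψ ⬝ᵥ T *ᵥ ψ
  have hq : q.im = 0 := hT.im_star_dotProduct_mulVec_self ψ
  have hquad : star ψ ⬝ᵥ (T * proj ψ * T) *ᵥ ψ = q * q := by
    rw [← mulVec_mulVec, ← mulVec_mulVec, proj_mulVec, mulVec_smul, dotProduct_smul,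
      smul_eq_mul]
  rw [expVal, mul_smul_comm, smul_mul_assoc, smul_mulVec, dotProduct_smul, hquad,
    Complex.real_smul, Complex.re_ofReal_mul, Complex.mul_re, hq]
  ring

theorem conjTranspose_frameMatrix_mul {W : ι → ℝ} (hW : ∀ k, 0 ≤ W k) (ψ : ι → Fin d → ℂ) :
    (frameMatrix W ψ)ᴴ * frameMatrix W ψ =
      Matrix.of fun i j => (Real.sqrt (W i * W j) : ℂ) * (star (ψ i) ⬝ᵥ ψ j) := by
  ext i j
  simp only [frameMatrix, mul_apply, conjTranspose_apply, of_apply, dotProduct, star_mul',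
    RCLike.star_def, Complex.conj_ofReal, Pi.star_apply, Finset.mul_sum, Real.sqrt_mul (hW i),
    Complex.ofReal_mul]
  exact Finset.sum_congr rfl fun x _ => by ring

theorem conjTranspose_frameMatrix_mul_mul_apply_self {W : ι → ℝ} (hW : ∀ k, 0 ≤ W k)
    (ψ : ι → Fin d → ℂ) (T : Matrix (Fin d) (Fin d) ℂ) (k : ι) :
    ((frameMatrix W ψ)ᴴ * T * frameMatrix W ψ) k k = W k * (star (ψ k) ⬝ᵥ T *ᵥ ψ k) := by
  rw [conjTranspose_mul_mul_apply, frameMatrix_transpose_apply, star_smul, mulVec_smul,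
    smul_dotProduct, dotProduct_smul, smul_smul, Complex.star_def, Complex.conj_ofReal,
    smul_eq_mul, Complex.ofReal_sqrt_mul_self (hW k)]

variable [Fintype ι]

theorem frameMatrix_mul_conjTranspose {W : ι → ℝ} (hW : ∀ k, 0 ≤ W k) (ψ : ι → Fin d → ℂ) :
    frameMatrix W ψ * (frameMatrix W ψ)ᴴ = ∑ k, W k • proj (ψ k) := by
  ext x y
  simp only [frameMatrix, proj, mul_apply, conjTranspose_apply, of_apply, Matrix.sum_apply,
    Matrix.smul_apply, vecMulVec_apply, star_mul', RCLike.star_def, Complex.conj_ofReal,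
    Pi.star_apply, Complex.real_smul]
  refine Finset.sum_congr rfl fun k _ => ?_
  linear_combination (ψ k x * starRingEnd ℂ (ψ k y)) * Complex.ofReal_sqrt_mul_self (hW k)

end Ensemble

theorem bwsrm_success_eq_gram_sqrt_general {d m : ℕ}
    (ψ : Fin m → Fin d → ℂ)
    (p : Fin m → ℝ)
    (W : Fin m → ℝ) (hW : ∀ k, 0 < W k)
    (hS : (∑ ℓ, W ℓ • proj (ψ ℓ)).PosDef)
    (M : Fin m → Matrix (Fin d) (Fin d) ℂ)
    (hM : ∀ k, M k = (hS.posSemidef.sqrt)⁻¹ * (W k • proj (ψ k)) * (hS.posSemidef.sqrt)⁻¹)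
    (G : Matrix (Fin m) (Fin m) ℂ)
    (hGdef : G = Matrix.of fun i j => (Real.sqrt (W i * W j) : ℂ) * (star (ψ i) ⬝ᵥ ψ j))
    (hG : G.PosSemidef) :
    ∑ k, p k * expVal (M k) (ψ k) = ∑ k, (p k / W k) * ((hG.sqrt k k).re) ^ 2 := by
  have hW₀ : ∀ k, 0 ≤ W k := fun k => (hW k).le
  set T := (hS.posSemidef.sqrt)⁻¹
  have hT : T.IsHermitian := hS.posSemidef.posSemidef_sqrt.inv.isHermitian
  have hsqrt : (frameMatrix W ψ)ᴴ * T * frameMatrix W ψ = hG.sqrt :=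
    conjTranspose_mul_inv_sqrt_mul_eq_sqrt hS hG (frameMatrix_mul_conjTranspose hW₀ ψ)
      (hGdef ▸ conjTranspose_frameMatrix_mul hW₀ ψ)
  refine Finset.sum_congr rfl fun k _ => ?_
  rw [hM, expVal_mul_smul_proj_mul hT, ← hsqrt,
    conjTranspose_frameMatrix_mul_mul_apply_self hW₀, Complex.re_ofReal_mul]
  field_simp [(hW k).ne']

/-- the success probability of the Belavkin weighted square-root measurement
equals `∑ k (p k / W k) (Re((G^{1/2})_{kk}))²` where `G` is the weighted Gram matrix. -/
theorem bwsrm_success_eq_gram_sqrt {d m : ℕ}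
    (ψ : Fin m → Fin d → ℂ) (hψ : ∀ k, star (ψ k) ⬝ᵥ ψ k = 1)
    (p : Fin m → ℝ) (hp : ∀ k, 0 ≤ p k) (hp1 : ∑ k, p k = 1)
    (W : Fin m → ℝ) (hW : ∀ k, 0 < W k)
    (hS : (∑ ℓ, W ℓ • proj (ψ ℓ)).PosDef)
    (M : Fin m → Matrix (Fin d) (Fin d) ℂ)
    (hM : ∀ k, M k = (hS.posSemidef.sqrt)⁻¹ * (W k • proj (ψ k)) * (hS.posSemidef.sqrt)⁻¹)
    (G : Matrix (Fin m) (Fin m) ℂ)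
    (hGdef : G = Matrix.of fun i j => (Real.sqrt (W i * W j) : ℂ) * (star (ψ i) ⬝ᵥ ψ j))
    (hG : G.PosSemidef) :
    ∑ k, p k * expVal (M k) (ψ k) = ∑ k, (p k / W k) * ((hG.sqrt k k).re) ^ 2 :=
  bwsrm_success_eq_gram_sqrt_general ψ p W hW hS M hM G hGdef hG
end
end

section
/- For all p ∈ [0,1] and c ∈ [0,1], with s := √(1 − c²), the inequality 2 p (1−p) c² / (1 + 2 √(p(1−p)) s) ≥ p (1−p) c² / (p² + (1−p)² + 2 p (1−p) s) holds; that is, for binary pure-state ensembles the failure rate of the pretty good measurement is at least that of Holevo's quadratically weighted measurement, P_fail^PGM ≥ P_fail^Holevo. Moreover, equality holds if and only if p ∈ {0, 1/2, 1} or c = 0. -/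
/-!
Put `r = √(p(1-p)) ∈ [0, 1/2]` and `s = √(1-c²) ∈ [0, 1]`. Since `p² + (1-p)² = 1 - 2r²`,
the two failure rates are `2a / (1 + 2rs)` and `a / (1 - 2r² + 2r²s)` with `a = r²c²`,
and the whole comparison rests on the factorization
`2 (1 - 2r² + 2r²s) - (1 + 2rs) = (1 - 2r)(1 + 2r - 2rs)`,
whose factors are both nonnegative and vanish together only at `r = 1/2`.
-/

open Real

lemma div_le_two_mul_div {a x y : ℝ} (ha : 0 ≤ a) (hx : 0 < x) (hxy : x ≤ 2 * y) :
    a / y ≤ 2 * a / x := by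
  have hy : 0 < y := by linarith
  rw [div_le_div_iff₀ hy hx]
  nlinarith

lemma two_mul_div_eq_div_iff {a x y : ℝ} (hx : 0 < x) (hy : 0 < y) :
    2 * a / x = a / y ↔ a = 0 ∨ x = 2 * y := by
  rw [div_eq_div_iff hx.ne' hy.ne', ← sub_eq_zero, show 2 * a * y - a * x = a * (2 * y - x) by ring,
    mul_eq_zero, sub_eq_zero, eq_comm (a := 2 * y)]

lemma two_mul_holevo_denom_sub_pgm_denom (r s : ℝ) :
    2 * (1 - 2 * r ^ 2 + 2 * r ^ 2 * s) - (1 + 2 * r * s) = (1 - 2 * r) * (1 + 2 * r - 2 * r * s) := by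
  ring

lemma holevo_le_pgm {r s : ℝ} (a : ℝ) (ha : 0 ≤ a) (hr₀ : 0 ≤ r) (hr : r ≤ 1 / 2) (hs₀ : 0 ≤ s)
    (hs₁ : s ≤ 1) :
    a / (1 - 2 * r ^ 2 + 2 * r ^ 2 * s) ≤ 2 * a / (1 + 2 * r * s) ∧
      (2 * a / (1 + 2 * r * s) = a / (1 - 2 * r ^ 2 + 2 * r ^ 2 * s) ↔ a = 0 ∨ r = 1 / 2) := by
  have hx : 0 < 1 + 2 * r * s := by positivity
  have hy : 0 < 1 - 2 * r ^ 2 + 2 * r ^ 2 * s := by nlinarith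
  have hfactor : 0 < 1 + 2 * r - 2 * r * s := by nlinarith
  have hgap := two_mul_holevo_denom_sub_pgm_denom r s
  refine ⟨div_le_two_mul_div ha hx (by nlinarith), ?_⟩
  rw [two_mul_div_eq_div_iff hx hy]
  refine or_congr Iff.rfl ⟨fun h => ?_, fun h => ?_⟩
  · have : (1 - 2 * r) * (1 + 2 * r - 2 * r * s) = 0 := by linarith
    rcases mul_eq_zero.mp this with h' | h' <;> linarith
  · subst h
    linarith

lemma sqrt_mul_one_sub_le_half (p : ℝ) : √(p * (1 - p)) ≤ 1 / 2 := by
  rw [sqrt_le_left (by norm_num)]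
  nlinarith [sq_nonneg (2 * p - 1)]

lemma sqrt_mul_one_sub_eq_half_iff (p : ℝ) : √(p * (1 - p)) = 1 / 2 ↔ p = 1 / 2 := by
  rw [sqrt_eq_iff_mul_self_eq_of_pos (by norm_num)]
  constructor
  · intro h
    have : (p - 1 / 2) ^ 2 = 0 := by linarith
    linarith [pow_eq_zero_iff (n := 2) two_ne_zero |>.mp this]
  · rintro rfl
    norm_num

lemma sqrt_mul_one_sub_eq_zero_iff {p : ℝ} (hp : p ∈ Set.Icc (0 : ℝ) 1) :
    √(p * (1 - p)) = 0 ↔ p = 0 ∨ p = 1 := by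
  rw [sqrt_eq_zero (mul_nonneg hp.1 (sub_nonneg.mpr hp.2)), mul_eq_zero, sub_eq_zero, eq_comm (a := 1)]

theorem pgm_ge_holevo_binary_general (p c : ℝ) (hp : p ∈ Set.Icc (0:ℝ) 1) :
    2*p*(1-p)*c^2 / (1 + 2*Real.sqrt (p*(1-p)) * Real.sqrt (1-c^2))
      ≥ p*(1-p)*c^2 / (p^2 + (1-p)^2 + 2*p*(1-p)*Real.sqrt (1-c^2))
    ∧ (2*p*(1-p)*c^2 / (1 + 2*Real.sqrt (p*(1-p)) * Real.sqrt (1-c^2))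
        = p*(1-p)*c^2 / (p^2 + (1-p)^2 + 2*p*(1-p)*Real.sqrt (1-c^2))
      ↔ (p = 0 ∨ p = 1/2 ∨ p = 1 ∨ c = 0)) := by
  set s := √(1 - c ^ 2)
  set r := √(p * (1 - p)) with hr
  have hr_sq : r ^ 2 = p * (1 - p) := sq_sqrt (mul_nonneg hp.1 (sub_nonneg.mpr hp.2))
  have hs₁ : s ≤ 1 := sqrt_le_one.mpr (by linarith [sq_nonneg c])
  have hpgm_num : 2 * p * (1 - p) * c ^ 2 = 2 * (r ^ 2 * c ^ 2) := by rw [hr_sq]; ring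
  have hhol_num : p * (1 - p) * c ^ 2 = r ^ 2 * c ^ 2 := by rw [hr_sq]
  have hhol_denom : p ^ 2 + (1 - p) ^ 2 + 2 * p * (1 - p) * s = 1 - 2 * r ^ 2 + 2 * r ^ 2 * s := by
    rw [hr_sq]; ring
  rw [hpgm_num, hhol_num, hhol_denom]
  obtain ⟨hle, heq⟩ := holevo_le_pgm (r ^ 2 * c ^ 2) (by positivity) (sqrt_nonneg _)
    (sqrt_mul_one_sub_le_half p) (sqrt_nonneg _) hs₁
  refine ⟨hle, heq.trans ?_⟩
  rw [mul_eq_zero, pow_eq_zero_iff two_ne_zero, pow_eq_zero_iff two_ne_zero, hr,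
    sqrt_mul_one_sub_eq_zero_iff hp, sqrt_mul_one_sub_eq_half_iff]
  tauto

/-- for binary pure-state ensembles the pretty good measurement's failure rate
is at least that of Holevo's quadratically weighted measurement, with equality iff
`p ∈ {0, 1/2, 1}` or `c = 0`. -/
theorem pgm_ge_holevo_binary (p c : ℝ) (hp : p ∈ Set.Icc (0:ℝ) 1) (hc : c ∈ Set.Icc (0:ℝ) 1) :
    2*p*(1-p)*c^2 / (1 + 2*Real.sqrt (p*(1-p)) * Real.sqrt (1-c^2))
      ≥ p*(1-p)*c^2 / (p^2 + (1-p)^2 + 2*p*(1-p)*Real.sqrt (1-c^2))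
    ∧ (2*p*(1-p)*c^2 / (1 + 2*Real.sqrt (p*(1-p)) * Real.sqrt (1-c^2))
        = p*(1-p)*c^2 / (p^2 + (1-p)^2 + 2*p*(1-p)*Real.sqrt (1-c^2))
      ↔ (p = 0 ∨ p = 1/2 ∨ p = 1 ∨ c = 0)) :=
  pgm_ge_holevo_binary_general p c hp
end

section
/- The supremum of the set { F_PGM(p,c) / F_opt(p,c) : p ∈ (0,1), c ∈ (0,1] } equals 2, where F_PGM(p,c) = 2p(1−p)c²/(1 + 2√(p(1−p))√(1−c²)) and F_opt(p,c) = 1/2 − √(1/4 − p(1−p)c²). That is, over binary pure-state ensembles the worst-case ratio of the failure rate of the pretty good measurement to the optimal failure rate is exactly 2. -/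
/-! Writing `x = p(1-p)c²` and `s = √(1/4 - x)`, one has `x = (1/2 - s)(1/2 + s)`, so the ratio
equals `(1 + 2s) / (1 + 2√(p(1-p))√(1-c²))`. The denominator is at least `1` and `s < 1/2`, so
the ratio is at most `2`; at `c = 1` the denominator is `1` and `s → 1/2` as `p → 0`. -/

open Filter Topology Set

noncomputable section

def pgmFailure (p c : ℝ) : ℝ :=
  2*p*(1-p)*c^2 / (1 + 2*√(p*(1-p)) * √(1-c^2))

def optFailure (p c : ℝ) : ℝ :=
  1/2 - √(1/4 - p*(1-p)*c^2)

lemma div_half_sub_sqrt_quarter_sub {x : ℝ} (hx0 : 0 < x) (hx : x ≤ 1/4) :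
    x / (1/2 - √(1/4 - x)) = 1/2 + √(1/4 - x) := by
  have hsq : √(1/4 - x) ^ 2 = 1/4 - x := Real.sq_sqrt (by linarith)
  have hlt : √(1/4 - x) < 1/2 := by nlinarith [Real.sqrt_nonneg (1/4 - x)]
  rw [div_eq_iff (by linarith)]
  linear_combination hsq

lemma mul_one_sub_mul_sq_mem_Ioc {p c : ℝ} (hp : p ∈ Ioo 0 1) (hc : c ∈ Ioc 0 1) :
    p*(1-p)*c^2 ∈ Ioc 0 (1/4) := by
  obtain ⟨hp0, hp1⟩ := hp
  obtain ⟨hc0, hc1⟩ := hc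
  have hq : 0 < p*(1-p) := mul_pos hp0 (by linarith)
  refine ⟨by positivity, ?_⟩
  nlinarith [sq_nonneg (p - 1/2), pow_le_one₀ hc0.le hc1 (n := 2)]

lemma pgmFailure_div_optFailure {p c : ℝ} (hp : p ∈ Ioo 0 1) (hc : c ∈ Ioc 0 1) :
    pgmFailure p c / optFailure p c =
      (1 + 2*√(1/4 - p*(1-p)*c^2)) / (1 + 2*√(p*(1-p)) * √(1-c^2)) := by
  obtain ⟨hx0, hx⟩ := mul_one_sub_mul_sq_mem_Ioc hp hc
  have key := div_half_sub_sqrt_quarter_sub hx0 hx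
  unfold pgmFailure optFailure
  calc _ = 2 * (p*(1-p)*c^2 / (1/2 - √(1/4 - p*(1-p)*c^2))) /
        (1 + 2*√(p*(1-p)) * √(1-c^2)) := by ring
    _ = _ := by rw [key]; ring

lemma pgmFailure_div_optFailure_le_two {p c : ℝ} (hp : p ∈ Ioo 0 1) (hc : c ∈ Ioc 0 1) :
    pgmFailure p c / optFailure p c ≤ 2 := by
  rw [pgmFailure_div_optFailure hp hc]
  have hden : 1 ≤ 1 + 2*√(p*(1-p)) * √(1-c^2) := by
    have := mul_nonneg (Real.sqrt_nonneg (p*(1-p))) (Real.sqrt_nonneg (1-c^2))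
    linarith
  have hs : √(1/4 - p*(1-p)*c^2) ≤ 1/2 := by
    rw [Real.sqrt_le_left (by norm_num)]
    linarith [(mul_one_sub_mul_sq_mem_Ioc hp hc).1]
  calc _ ≤ 1 + 2*√(1/4 - p*(1-p)*c^2) := div_le_self (by positivity) hden
    _ ≤ 2 := by linarith

lemma tendsto_pgmFailure_div_optFailure_one :
    Tendsto (fun p => pgmFailure p 1 / optFailure p 1) (𝓝[>] 0) (𝓝 2) := by
  have hcont : Continuous fun p : ℝ => 1 + 2*√(1/4 - p*(1-p)) := by fun_prop
  have hlim : Tendsto (fun p : ℝ => 1 + 2*√(1/4 - p*(1-p))) (𝓝[>] 0) (𝓝 2) := by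
    convert (hcont.tendsto 0).mono_left nhdsWithin_le_nhds using 2
    rw [show (1/4 : ℝ) = (1/2)^2 by norm_num]
    norm_num
  refine hlim.congr' ?_
  filter_upwards [Ioo_mem_nhdsGT one_pos] with p hp
  rw [pgmFailure_div_optFailure hp ⟨one_pos, le_rfl⟩]
  norm_num

/-- over binary pure-state ensembles the worst-case ratio of the failure rate of
the pretty good measurement to the optimal failure rate is exactly 2 (as a supremum). -/
theorem pgm_worst_case_ratio :
    IsLUB {r : ℝ | ∃ p c : ℝ, p ∈ Set.Ioo (0:ℝ) 1 ∧ c ∈ Set.Ioc (0:ℝ) 1 ∧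
      r = (2*p*(1-p)*c^2 / (1 + 2*Real.sqrt (p*(1-p)) * Real.sqrt (1-c^2))) /
          (1/2 - Real.sqrt (1/4 - p*(1-p)*c^2))} 2 := by
  refine ⟨?_, fun y hy => ?_⟩
  · rintro r ⟨p, c, hp, hc, rfl⟩
    exact pgmFailure_div_optFailure_le_two hp hc
  · refine le_of_tendsto tendsto_pgmFailure_div_optFailure_one ?_
    filter_upwards [Ioo_mem_nhdsGT one_pos] with p hp
    exact hy ⟨p, 1, hp, ⟨one_pos, le_rfl⟩, rfl⟩

end
end

section
/- The value (√2 + 1)/2 is the greatest element of the set { F_Hol(p,c) / F_opt(p,c) : p ∈ (0,1), c ∈ (0,1] }, where F_Hol(p,c) = p(1−p)c²/(p² + (1−p)² + 2p(1−p)√(1−c²)) and F_opt(p,c) = 1/2 − √(1/4 − p(1−p)c²); the maximum is attained at p = √2/2, c = 1. That is, over binary pure-state ensembles the worst-case ratio of the failure rate of Holevo's quadratically weighted measurement to the optimal failure rate is exactly (√2+1)/2 ≈ 1.207. -/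
/-!
Write `q = p(1-p)` and `x = q (1 - √(1-c²))`. Rationalizing `F_opt = q c² / (1/2 + √(1/4 - q c²))`
cancels the numerator of `F_Hol`, whose denominator is `1 - 2x`, so the ratio is
`(1/2 + √(1/4 - q c²)) / (1 - 2x)`. As `x ≤ q c²`, this is at most `(1/2 + u)/(1/2 + 2u²)` with
`u = √(1/4 - x)`, and `(√2+1)/2 · (1/2 + 2u²) - (1/2 + u) = (√2+1)(u - (√2-1)/2)² ≥ 0`.
Equality holds at `c = 1`, `p = √2/2`, where `x = q = (√2-1)/2`.
-/

open Real

noncomputable def holevoFailure (p c : ℝ) : ℝ :=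
  p*(1-p)*c^2 / (p^2 + (1-p)^2 + 2*p*(1-p)*√(1-c^2))

noncomputable def optimalFailure (p c : ℝ) : ℝ :=
  1/2 - √(1/4 - p*(1-p)*c^2)

lemma half_sub_sqrt_quarter_sub {y : ℝ} (hy : y ≤ 1/4) :
    1/2 - √(1/4 - y) = y / (1/2 + √(1/4 - y)) := by
  have hsq : √(1/4 - y) ^ 2 = 1/4 - y := sq_sqrt (by linarith)
  have hpos : 0 < 1/2 + √(1/4 - y) := by positivity
  rw [eq_div_iff hpos.ne']
  linear_combination -hsq

lemma one_sub_sqrt_one_sub_sq_le {c : ℝ} (hc : c^2 ≤ 1) : 1 - √(1 - c^2) ≤ c^2 := by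
  have hsq : √(1 - c^2) ^ 2 = 1 - c^2 := sq_sqrt (by linarith)
  have hs : 0 ≤ √(1 - c^2) := sqrt_nonneg _
  have hs1 : √(1 - c^2) ≤ 1 := sqrt_le_one.mpr (sub_le_self _ (sq_nonneg c))
  nlinarith

lemma holevoFailure_div_optimalFailure {p c : ℝ} (hq : p*(1-p)*c^2 ≠ 0) (hc : c^2 ≤ 1) :
    holevoFailure p c / optimalFailure p c =
      (1/2 + √(1/4 - p*(1-p)*c^2)) / (1 - 2*(p*(1-p)*(1 - √(1-c^2)))) := by
  have hquarter : p*(1-p)*c^2 ≤ 1/4 := by nlinarith [sq_nonneg (2*p-1), sq_nonneg c]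
  rw [holevoFailure, optimalFailure, half_sub_sqrt_quarter_sub hquarter,
    div_div_div_cancel_left' _ _ hq]
  congr 1
  ring

lemma half_add_le_mul_half_add_two_mul_sq (u : ℝ) :
    1/2 + u ≤ (√2 + 1)/2 * (1/2 + 2*u^2) := by
  have h2 : √2 ^ 2 = 2 := sq_sqrt (by norm_num)
  have hdiff : (√2 + 1)/2 * (1/2 + 2*u^2) - (1/2 + u) = (√2 + 1) * (u - (√2 - 1)/2)^2 := by
    linear_combination (u - (√2 - 1)/4) * h2
  have hnonneg : 0 ≤ (√2 + 1) * (u - (√2 - 1)/2)^2 := by positivity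
  linarith

lemma half_add_sqrt_quarter_sub_div_le {x : ℝ} (hx : x ≤ 1/4) :
    (1/2 + √(1/4 - x)) / (1 - 2*x) ≤ (√2 + 1)/2 := by
  have hsq : √(1/4 - x) ^ 2 = 1/4 - x := sq_sqrt (by linarith)
  rw [div_le_iff₀ (by linarith), show 1 - 2*x = 1/2 + 2 * √(1/4 - x) ^ 2 by rw [hsq]; ring]
  exact half_add_le_mul_half_add_two_mul_sq _

lemma holevoFailure_div_optimalFailure_le {p c : ℝ} (hp : p ∈ Set.Ioo 0 1) (hc : c ∈ Set.Ioc 0 1) :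
    holevoFailure p c / optimalFailure p c ≤ (√2 + 1)/2 := by
  obtain ⟨hp0, hp1⟩ := hp
  obtain ⟨hc0, hc1⟩ := hc
  have hc2 : c^2 ≤ 1 := by nlinarith
  have hq : 0 < p*(1-p) := mul_pos hp0 (by linarith)
  have hq4 : p*(1-p) ≤ 1/4 := by nlinarith [sq_nonneg (2*p-1)]
  have hs : 0 ≤ √(1 - c^2) := sqrt_nonneg _
  set x := p*(1-p)*(1 - √(1-c^2))
  have hx_le : x ≤ p*(1-p)*c^2 :=
    mul_le_mul_of_nonneg_left (one_sub_sqrt_one_sub_sq_le hc2) hq.le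
  have hx_quarter : x ≤ 1/4 := by nlinarith
  rw [holevoFailure_div_optimalFailure (mul_pos hq (pow_pos hc0 2)).ne' hc2]
  calc (1/2 + √(1/4 - p*(1-p)*c^2)) / (1 - 2*x)
      ≤ (1/2 + √(1/4 - x)) / (1 - 2*x) := by
        gcongr
        linarith
    _ ≤ (√2 + 1)/2 := half_add_sqrt_quarter_sub_div_le hx_quarter

lemma holevoFailure_div_optimalFailure_sqrt_two_div_two_one :
    holevoFailure (√2/2) 1 / optimalFailure (√2/2) 1 = (√2 + 1)/2 := by
  have h2 : √2 ^ 2 = 2 := sq_sqrt (by norm_num)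
  have h1 : 1 < √2 := one_lt_sqrt_two
  have h32 : √2 < 3/2 := sqrt_two_lt_three_halves
  have hq : √2/2 * (1 - √2/2) * 1^2 ≠ 0 := by
    have : 0 < √2/2 * (1 - √2/2) := mul_pos (by positivity) (by linarith)
    simpa using this.ne'
  rw [holevoFailure_div_optimalFailure hq (by norm_num),
    show (1:ℝ) - 1^2 = 0 by norm_num, sqrt_zero,
    show (1:ℝ)/4 - √2/2 * (1 - √2/2) * 1^2 = ((√2 - 1)/2)^2 by ring,
    sqrt_sq (by linarith), div_eq_iff (by nlinarith)]
  linear_combination (-(√2 - 1)/4) * h2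

/-- over binary pure-state ensembles, the worst-case ratio of the failure rate of
Holevo's quadratically weighted measurement to the optimal failure rate is exactly
`(√2 + 1)/2`, attained at `p = √2/2`, `c = 1`. -/
theorem holevo_worst_case_ratio :
    IsGreatest {r : ℝ | ∃ p c : ℝ, p ∈ Set.Ioo (0:ℝ) 1 ∧ c ∈ Set.Ioc (0:ℝ) 1 ∧
      r = (p*(1-p)*c^2 / (p^2 + (1-p)^2 + 2*p*(1-p)*Real.sqrt (1-c^2))) /
          (1/2 - Real.sqrt (1/4 - p*(1-p)*c^2))} ((Real.sqrt 2 + 1)/2)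
    ∧ ((Real.sqrt 2/2)*(1-Real.sqrt 2/2)*1^2 /
          ((Real.sqrt 2/2)^2 + (1-Real.sqrt 2/2)^2
            + 2*(Real.sqrt 2/2)*(1-Real.sqrt 2/2)*Real.sqrt (1-1^2))) /
        (1/2 - Real.sqrt (1/4 - (Real.sqrt 2/2)*(1-Real.sqrt 2/2)*1^2))
      = (Real.sqrt 2 + 1)/2 := by
  have hval := holevoFailure_div_optimalFailure_sqrt_two_div_two_one
  have hp : √2/2 ∈ Set.Ioo (0:ℝ) 1 := ⟨by positivity, by linarith [sqrt_two_lt_three_halves]⟩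
  refine ⟨⟨⟨√2/2, 1, hp, ⟨one_pos, le_rfl⟩, hval.symm⟩, ?_⟩, hval⟩
  rintro r ⟨p, c, hp, hc, rfl⟩
  exact holevoFailure_div_optimalFailure_le hp hc
end

section
/- Fix p ∈ (0,1) and weights W₁, W₂ > 0, and set p₁ = p, p₂ = 1−p, c₁ = W₁/p₁², c₂ = W₂/p₂². Then the limit as c → 0⁺ of the ratio F_W(p,c) / F_opt(p,c) exists and equals (c₁ p₁ + c₂ p₂) / (√c₁ p₁ + √c₂ p₂)², where F_W(p,c) = (p₁ W₂ + p₂ W₁) c² / (W₁ + W₂ + 2√(W₁W₂)√(1−c²)) and F_opt(p,c) = 1/2 − √(1/4 − p₁ p₂ c²). -/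
/-!
Rationalising, `1/2 - √(1/4 - p₁p₂c²) = p₁p₂c² / (1/2 + √(1/4 - p₁p₂c²))`, so `F_opt ~ p₁p₂c²`
as `c → 0`, while `F_W ~ (p₁W₂ + p₂W₁)c² / (√W₁ + √W₂)²`. The ratio therefore tends to
`(p₁W₂ + p₂W₁) / (p₁p₂ (√W₁ + √W₂)²)`, which is the stated limit since `√cₖ pₖ = √Wₖ`.
-/

open Filter Topology Real

theorem sub_sqrt_eq_div_add_sqrt {a b : ℝ} (ha : 0 < a) (hb : 0 ≤ b) :
    a - √b = (a ^ 2 - b) / (a + √b) := by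
  have hpos : 0 < a + √b := by positivity
  rw [eq_div_iff hpos.ne']
  linear_combination (-1 : ℝ) * sq_sqrt hb

theorem tendsto_sq_div_half_sub_sqrt {q : ℝ} (hq : q ≠ 0) :
    Tendsto (fun c : ℝ => c ^ 2 / (1 / 2 - √(1 / 4 - q * c ^ 2))) (𝓝[≠] 0) (𝓝 q⁻¹) := by
  have hcont : Continuous fun c : ℝ => (1 / 2 + √(1 / 4 - q * c ^ 2)) / q := by fun_prop
  have hlim : Tendsto (fun c : ℝ => (1 / 2 + √(1 / 4 - q * c ^ 2)) / q) (𝓝[≠] 0) (𝓝 q⁻¹) := by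
    have h0 : (1 / 2 + √(1 / 4 - q * 0 ^ 2)) / q = q⁻¹ := by
      rw [show (1 / 4 : ℝ) - q * 0 ^ 2 = (1 / 2) ^ 2 by norm_num, sqrt_sq (by norm_num)]
      norm_num [div_eq_mul_inv]
    rw [← h0]
    exact (hcont.tendsto 0).mono_left nhdsWithin_le_nhds
  have hrad : ∀ᶠ c : ℝ in 𝓝 0, 0 < 1 / 4 - q * c ^ 2 :=
    ((by fun_prop : Continuous fun c : ℝ => 1 / 4 - q * c ^ 2).tendsto 0).eventually
      (lt_mem_nhds (by norm_num))
  refine hlim.congr' ?_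
  filter_upwards [nhdsWithin_le_nhds hrad, self_mem_nhdsWithin] with c hc (hc0 : c ≠ 0)
  rw [sub_sqrt_eq_div_add_sqrt (by norm_num) hc.le,
    show (1 / 2 : ℝ) ^ 2 - (1 / 4 - q * c ^ 2) = q * c ^ 2 by ring]
  field_simp

theorem tendsto_div_weightedDenominator (A : ℝ) {W₁ W₂ : ℝ} (hW₁ : 0 < W₁) (hW₂ : 0 < W₂) :
    Tendsto (fun c : ℝ => A / (W₁ + W₂ + 2 * √(W₁ * W₂) * √(1 - c ^ 2))) (𝓝 0)
      (𝓝 (A / (√W₁ + √W₂) ^ 2)) := by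
  have h0 : W₁ + W₂ + 2 * √(W₁ * W₂) * √(1 - 0 ^ 2) = (√W₁ + √W₂) ^ 2 := by
    rw [add_sq, sq_sqrt hW₁.le, sq_sqrt hW₂.le, sqrt_mul hW₁.le]
    norm_num
    ring
  have hne : (√W₁ + √W₂) ^ 2 ≠ 0 := by positivity
  rw [← h0] at hne ⊢
  exact tendsto_const_nhds.div ((by fun_prop : Continuous fun c : ℝ =>
    W₁ + W₂ + 2 * √(W₁ * W₂) * √(1 - c ^ 2)).tendsto 0) hne

theorem div_sq_sqrt_weights_eq {p₁ p₂ : ℝ} (hp₁ : 0 < p₁) (hp₂ : 0 < p₂) (W₁ W₂ : ℝ) :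
    (W₁ / p₁ ^ 2 * p₁ + W₂ / p₂ ^ 2 * p₂) / (√(W₁ / p₁ ^ 2) * p₁ + √(W₂ / p₂ ^ 2) * p₂) ^ 2
      = (p₁ * W₂ + p₂ * W₁) / (√W₁ + √W₂) ^ 2 * (p₁ * p₂)⁻¹ := by
  have hsqrt : ∀ {W p : ℝ}, 0 < p → √(W / p ^ 2) * p = √W := fun {W p} hp => by
    rw [sqrt_div' W (sq_nonneg p), sqrt_sq hp.le, div_mul_cancel₀ _ hp.ne']
  rw [hsqrt hp₁, hsqrt hp₂]
  field_simp
  ring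

/-- the limit as `c → 0⁺` of the ratio of the weighted measurement's failure rate
to the optimal failure rate for binary ensembles is `(c₁p₁ + c₂p₂)/(√c₁ p₁ + √c₂ p₂)²`,
where `cₖ = Wₖ/pₖ²`. -/
theorem bwsrm_ratio_limit (p W₁ W₂ : ℝ) (hp : p ∈ Set.Ioo (0:ℝ) 1)
    (hW1 : 0 < W₁) (hW2 : 0 < W₂)
    (p₁ p₂ c₁ c₂ : ℝ) (hp1 : p₁ = p) (hp2 : p₂ = 1 - p)
    (hc1 : c₁ = W₁ / p₁^2) (hc2 : c₂ = W₂ / p₂^2) :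
    Filter.Tendsto (fun c : ℝ =>
        ((p₁*W₂ + p₂*W₁)*c^2 / (W₁ + W₂ + 2*Real.sqrt (W₁*W₂)*Real.sqrt (1-c^2))) /
        (1/2 - Real.sqrt (1/4 - p₁*p₂*c^2)))
      (nhdsWithin 0 (Set.Ioi 0))
      (nhds ((c₁*p₁ + c₂*p₂) / (Real.sqrt c₁ * p₁ + Real.sqrt c₂ * p₂)^2)) := by
  have hp₁ : 0 < p₁ := hp1 ▸ hp.1
  have hp₂ : 0 < p₂ := by linarith [hp.2]
  subst hc1 hc2
  have hweighted := (tendsto_div_weightedDenominator (p₁ * W₂ + p₂ * W₁) hW1 hW2).mono_left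
    (nhdsWithin_le_nhds (s := Set.Ioi 0))
  have hopt := (tendsto_sq_div_half_sub_sqrt (mul_pos hp₁ hp₂).ne').mono_left
    (nhdsWithin_mono 0 fun c (hc : 0 < c) => hc.ne')
  rw [div_sq_sqrt_weights_eq hp₁ hp₂]
  refine (hweighted.mul hopt).congr fun c => ?_
  ring
end

section
/- Fix p ∈ (0,1) and set p₁ = p, p₂ = 1−p. Then the limit as c → 0⁺ of F_Hol(p,c) / F_opt(p,c) equals 1, where F_Hol(p,c) = p₁p₂c²/(p₁² + p₂² + 2p₁p₂√(1−c²)) is the failure rate of the quadratically weighted Belavkin measurement (weights W_k = p_k²) and F_opt(p,c) = 1/2 − √(1/4 − p₁p₂c²) is the optimal failure probability. That is, Holevo's quadratically weighted measurement is asymptotically optimal for binary pure-state ensembles. -/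
/-!
Rationalising `1/2 - √(1/4 - x) = x / (1/2 + √(1/4 - x))` with `x = p₁p₂c²` cancels the common
factor `p₁p₂c²`, so for `c ≠ 0` the ratio of failure rates equals
`(1/2 + √(1/4 - p₁p₂c²)) / (p₁² + p₂² + 2p₁p₂√(1 - c²))`. This is continuous in `c`, and at
`c = 0` it is `1 / (p₁ + p₂)² = 1`.
-/

open Filter Topology Real

lemma sub_sqrt_sq_sub_eq_div {a x : ℝ} (ha : 0 < a) (hx : x ≤ a ^ 2) :
    a - √(a ^ 2 - x) = x / (a + √(a ^ 2 - x)) := by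
  have hs : √(a ^ 2 - x) ^ 2 = a ^ 2 - x := sq_sqrt (sub_nonneg.2 hx)
  rw [eq_div_iff (by positivity)]
  linear_combination -hs

namespace BinaryPureStates

noncomputable def holevoFailure (p₁ p₂ c : ℝ) : ℝ :=
  p₁ * p₂ * c ^ 2 / (p₁ ^ 2 + p₂ ^ 2 + 2 * p₁ * p₂ * √(1 - c ^ 2))

noncomputable def optimalFailure (p₁ p₂ c : ℝ) : ℝ :=
  1 / 2 - √(1 / 4 - p₁ * p₂ * c ^ 2)

variable {p₁ p₂ c : ℝ}

lemma optimalFailure_eq_div (h : p₁ * p₂ * c ^ 2 ≤ 1 / 4) :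
    optimalFailure p₁ p₂ c = p₁ * p₂ * c ^ 2 / (1 / 2 + √(1 / 4 - p₁ * p₂ * c ^ 2)) := by
  have h14 : (1 / 4 : ℝ) = (1 / 2) ^ 2 := by norm_num
  rw [optimalFailure, h14]
  exact sub_sqrt_sq_sub_eq_div one_half_pos (h14 ▸ h)

lemma holevoFailure_div_optimalFailure (h₀ : p₁ * p₂ * c ^ 2 ≠ 0)
    (h : p₁ * p₂ * c ^ 2 ≤ 1 / 4) :
    holevoFailure p₁ p₂ c / optimalFailure p₁ p₂ c =
      (1 / 2 + √(1 / 4 - p₁ * p₂ * c ^ 2)) / (p₁ ^ 2 + p₂ ^ 2 + 2 * p₁ * p₂ * √(1 - c ^ 2)) := by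
  rw [optimalFailure_eq_div h, holevoFailure, div_div_div_cancel_left' _ _ h₀]

lemma tendsto_holevoFailure_div_optimalFailure (hsum : p₁ + p₂ = 1) (hq : p₁ * p₂ ≠ 0) :
    Tendsto (fun c => holevoFailure p₁ p₂ c / optimalFailure p₁ p₂ c) (𝓝[≠] 0) (𝓝 1) := by
  set g : ℝ → ℝ := fun c =>
    (1 / 2 + √(1 / 4 - p₁ * p₂ * c ^ 2)) / (p₁ ^ 2 + p₂ ^ 2 + 2 * p₁ * p₂ * √(1 - c ^ 2))
  have hden₀ : p₁ ^ 2 + p₂ ^ 2 + 2 * p₁ * p₂ * √(1 - 0 ^ 2) = 1 := by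
    rw [zero_pow two_ne_zero, sub_zero, sqrt_one]
    linear_combination (p₁ + p₂ + 1) * hsum
  have hg₀ : g 0 = 1 := by
    have h14 : √(1 / 4 - p₁ * p₂ * 0 ^ 2) = 1 / 2 := by
      rw [show (1 / 4 - p₁ * p₂ * 0 ^ 2 : ℝ) = (1 / 2) ^ 2 by ring, sqrt_sq (by norm_num)]
    simp only [g, hden₀, h14]
    norm_num
  have hg : ContinuousAt g 0 :=
    ContinuousAt.div (by fun_prop) (by fun_prop) (by rw [hden₀]; exact one_ne_zero)
  have hsmall : ∀ᶠ c in 𝓝 (0 : ℝ), p₁ * p₂ * c ^ 2 ≤ 1 / 4 := by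
    have : Tendsto (fun c : ℝ => p₁ * p₂ * c ^ 2) (𝓝 0) (𝓝 0) :=
      (by fun_prop : Continuous fun c : ℝ => p₁ * p₂ * c ^ 2).tendsto' 0 0 (by simp)
    exact this.eventually (eventually_le_nhds (by norm_num))
  refine (hg₀ ▸ hg.tendsto.mono_left nhdsWithin_le_nhds).congr' ?_
  filter_upwards [self_mem_nhdsWithin, nhdsWithin_le_nhds hsmall] with c hc hc'
  exact (holevoFailure_div_optimalFailure (mul_ne_zero hq (pow_ne_zero 2 hc)) hc').symm

end BinaryPureStates

/-- Holevo's asymptotic optimality theorem, binary case: the ratio of the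
failure rate of the quadratically weighted Belavkin measurement to the optimal failure rate
tends to 1 as the two states approach orthogonality. -/
theorem holevo_asymptotically_optimal (p : ℝ) (hp : p ∈ Set.Ioo (0:ℝ) 1)
    (p₁ p₂ : ℝ) (hp1 : p₁ = p) (hp2 : p₂ = 1 - p) :
    Filter.Tendsto (fun c : ℝ =>
        (p₁*p₂*c^2 / (p₁^2 + p₂^2 + 2*p₁*p₂*Real.sqrt (1-c^2))) /
        (1/2 - Real.sqrt (1/4 - p₁*p₂*c^2)))
      (nhdsWithin 0 (Set.Ioi 0)) (nhds 1) := by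
  subst p₁ p₂
  have hq : p * (1 - p) ≠ 0 := (mul_pos hp.1 (sub_pos.2 hp.2)).ne'
  exact (BinaryPureStates.tendsto_holevoFailure_div_optimalFailure (add_sub_cancel p 1)
    hq).mono_left (nhdsGT_le_nhdsNE 0)
end

section
/- Consider the three-state ensemble in ℂ² given by ψ₁ = (√3/2, 1/2), ψ₂ = (√3/2, −1/2), ψ₃ = (1, 0), with priors p₁ = p₂ = 4/(11 + √3) and p₃ = 1 − 2p₁ = (3 + √3)/(11 + √3). Then: (i) p₃ > p₁ and p₃ > p₂, so ψ₃ is the a priori strictly most probable state; (ii) the POVM M₁ = (1/2)[[1,1],[1,1]], M₂ = (1/2)[[1,−1],[−1,1]], M₃ = 0 achieves the maximum of Σ_k p_k ⟨ψ_k, N_k ψ_k⟩ over all POVMs (N₁,N₂,N₃) on ℂ²; and (iii) ⟨ψ₃, M₃ ψ₃⟩ = 0, i.e. under this optimal measurement the most probable state is never detected. -/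
/-!
Weak duality for minimum-error discrimination: if `Y ≥ p_k |ψ_k⟩⟨ψ_k|` for every `k`, then
`Σ p_k ⟨ψ_k, N_k ψ_k⟩ = Σ re tr (N_k p_k |ψ_k⟩⟨ψ_k|) ≤ Σ re tr (N_k Y) = re tr Y` for every
POVM `N`. For the ensemble `(a, b), (a, -b), (1, 0)` with priors `p, p, q` the choice
`Y = p (a + b) diag(a, b)` is feasible as soon as `a, b ≥ 0` and `q ≤ p (a + b) a`, and its
trace `p (a + b)²` is attained by the measurement in the basis `(1, ±1)/√2`, which ignores the
third state. With `a = cos(π/6)`, `b = sin(π/6)` the given priors make `q = p (a + b) a`, and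
then `q > p`.
-/

open Matrix Filter
open scoped ComplexOrder

noncomputable section

theorem Matrix.PosSemidef.trace_mul_nonneg {𝕜 n : Type*} [RCLike 𝕜] [Fintype n]
    {A B : Matrix n n 𝕜} (hA : A.PosSemidef) (hB : B.PosSemidef) : 0 ≤ (A * B).trace := by
  classical
  open MatrixOrder in
  obtain ⟨C, rfl⟩ := CStarAlgebra.nonneg_iff_eq_star_mul_self.mp hA.nonneg
  rw [mul_assoc, trace_mul_comm, mul_assoc, star_eq_conjTranspose, ← mul_assoc]
  exact (hB.mul_mul_conjTranspose_same C).trace_nonneg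

section POVM

variable {d : ℕ}

@[simp]
theorem expVal_zero (ψ : Fin d → ℂ) : expVal 0 ψ = 0 := by
  simp [expVal]

theorem expVal_eq_re_trace_mul_proj (M : Matrix (Fin d) (Fin d) ℂ) (ψ : Fin d → ℂ) :
    expVal M ψ = (M * proj ψ).trace.re := by
  rw [expVal, proj, mul_vecMulVec, trace_vecMulVec, dotProduct_comm]

theorem posSemidef_ofReal_smul_proj {c : ℝ} (hc : 0 ≤ c) (ψ : Fin d → ℂ) :
    ((c : ℂ) • proj ψ).PosSemidef :=
  (posSemidef_vecMulVec_self_star ψ).smul (by exact_mod_cast hc)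

theorem IsPOVM.sum_mul_expVal_le_re_trace {m : ℕ} {N : Fin m → Matrix (Fin d) (Fin d) ℂ}
    (hN : IsPOVM N) (p : Fin m → ℝ) (ψ : Fin m → Fin d → ℂ) {Y : Matrix (Fin d) (Fin d) ℂ}
    (hY : ∀ k, (Y - (p k : ℂ) • proj (ψ k)).PosSemidef) :
    ∑ k, p k * expVal (N k) (ψ k) ≤ Y.trace.re := by
  have hterm k : p k * expVal (N k) (ψ k) ≤ (N k * Y).trace.re := by
    have := (Complex.le_def.mp ((hN.1 k).trace_mul_nonneg (hY k))).1
    rw [mul_sub, trace_sub, Complex.sub_re, mul_smul_comm, trace_smul, smul_eq_mul,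
      Complex.re_ofReal_mul, ← expVal_eq_re_trace_mul_proj] at this
    simpa using this
  calc ∑ k, p k * expVal (N k) (ψ k) ≤ ∑ k, (N k * Y).trace.re :=
        Finset.sum_le_sum fun k _ => hterm k
    _ = Y.trace.re := by rw [← Complex.re_sum, ← trace_sum, ← Finset.sum_mul, hN.2, one_mul]

end POVM

theorem proj_cons_cons (x y : ℂ) :
    proj ![x, y] = !![x * star x, x * star y; y * star x, y * star y] := by
  ext i j; fin_cases i <;> fin_cases j <;> rfl

section SymmetricEnsemble

variable {a b : ℝ}

theorem isPOVM_hadamard :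
    IsPOVM ![(1/2 : ℂ) • !![1, 1; 1, 1], (1/2 : ℂ) • !![1, -1; -1, 1], 0] := by
  refine ⟨fun k => ?_, ?_⟩
  · fin_cases k
    · simpa [proj_cons_cons] using posSemidef_ofReal_smul_proj (c := 1/2) (by norm_num) ![1, 1]
    · simpa [proj_cons_cons] using posSemidef_ofReal_smul_proj (c := 1/2) (by norm_num) ![1, -1]
    · exact PosSemidef.zero
  · ext i j
    fin_cases i <;> fin_cases j <;> norm_num [Fin.sum_univ_three, one_apply, cons_val_two, tail_cons]

theorem expVal_hadamard_plus :
    expVal ((1/2 : ℂ) • !![1, 1; 1, 1]) ![(a : ℂ), b] = (a + b) ^ 2 / 2 := by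
  simp [expVal, dotProduct, mulVec, Fin.sum_univ_two]; ring

theorem expVal_hadamard_minus :
    expVal ((1/2 : ℂ) • !![1, -1; -1, 1]) ![(a : ℂ), -b] = (a + b) ^ 2 / 2 := by
  simp [expVal, dotProduct, mulVec, Fin.sum_univ_two]; ring

-- `Y = Σ_k p_k |ψ_k⟩⟨ψ_k| M_k` for the Hadamard measurement `M` (Holevo's optimality condition).
theorem hadamard_dual_feasible {p q : ℝ} (ha : 0 ≤ a) (hb : 0 ≤ b) (hp : 0 ≤ p)
    (hq : q ≤ p * (a + b) * a) (k : Fin 3) :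
    (((p * (a + b) : ℝ) : ℂ) • !![(a : ℂ), 0; 0, b] - (![p, p, q] k : ℂ) •
      proj (![![(a : ℂ), b], ![(a : ℂ), -b], ![1, 0]] k)).PosSemidef := by
  fin_cases k
  · convert posSemidef_ofReal_smul_proj (mul_nonneg (mul_nonneg hp ha) hb) ![1, -1] using 1
    ext i j; fin_cases i <;> fin_cases j <;> simp [proj_cons_cons] <;> ring
  · convert posSemidef_ofReal_smul_proj (mul_nonneg (mul_nonneg hp ha) hb) ![1, 1] using 1
    ext i j; fin_cases i <;> fin_cases j <;> simp [proj_cons_cons] <;> ring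
  · convert (posSemidef_ofReal_smul_proj (sub_nonneg.mpr hq) ![1, 0]).add
      (posSemidef_ofReal_smul_proj (by positivity : 0 ≤ p * (a + b) * b) ![0, 1]) using 1
    ext i j; fin_cases i <;> fin_cases j <;> simp [proj_cons_cons]

theorem hadamard_measurement_optimal {p q : ℝ} (ha : 0 ≤ a) (hb : 0 ≤ b) (hp : 0 ≤ p)
    (hq : q ≤ p * (a + b) * a) {N : Fin 3 → Matrix (Fin 2) (Fin 2) ℂ} (hN : IsPOVM N) :
    p * expVal (N 0) ![(a : ℂ), b] + p * expVal (N 1) ![(a : ℂ), -b] + q * expVal (N 2) ![1, 0]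
      ≤ p * expVal ((1/2 : ℂ) • !![1, 1; 1, 1]) ![(a : ℂ), b]
        + p * expVal ((1/2 : ℂ) • !![1, -1; -1, 1]) ![(a : ℂ), -b] + q * expVal 0 ![1, 0] := by
  calc _ = ∑ k, ![p, p, q] k * expVal (N k) (![![(a : ℂ), b], ![(a : ℂ), -b], ![1, 0]] k) := by
        simp [Fin.sum_univ_three]
    _ ≤ (((p * (a + b) : ℝ) : ℂ) • !![(a : ℂ), 0; 0, b]).trace.re :=
        hN.sum_mul_expVal_le_re_trace _ _ (hadamard_dual_feasible ha hb hp hq)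
    _ = _ := by
        rw [expVal_hadamard_plus, expVal_hadamard_minus, expVal_zero]
        simp; ring

end SymmetricEnsemble

/-- a three-state ensemble in `ℂ²` for which the a priori strictly most probable
state is never detected by an optimal measurement. -/
theorem most_probable_state_never_detected
    (ψ₁ ψ₂ ψ₃ : Fin 2 → ℂ)
    (hψ1 : ψ₁ = ![(Real.sqrt 3 / 2 : ℂ), (1/2 : ℂ)])
    (hψ2 : ψ₂ = ![(Real.sqrt 3 / 2 : ℂ), (-(1/2) : ℂ)])
    (hψ3 : ψ₃ = ![1, 0])
    (p₁ p₂ p₃ : ℝ)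
    (hp1 : p₁ = 4 / (11 + Real.sqrt 3)) (hp2 : p₂ = p₁) (hp3 : p₃ = 1 - 2 * p₁)
    (M₁ M₂ M₃ : Matrix (Fin 2) (Fin 2) ℂ)
    (hM1 : M₁ = (1/2 : ℂ) • !![1, 1; 1, 1])
    (hM2 : M₂ = (1/2 : ℂ) • !![1, -1; -1, 1])
    (hM3 : M₃ = 0) :
    (p₃ > p₁ ∧ p₃ > p₂)
    ∧ (IsPOVM ![M₁, M₂, M₃] ∧
        ∀ N : Fin 3 → Matrix (Fin 2) (Fin 2) ℂ, IsPOVM N →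
          p₁ * expVal (N 0) ψ₁ + p₂ * expVal (N 1) ψ₂ + p₃ * expVal (N 2) ψ₃
            ≤ p₁ * expVal M₁ ψ₁ + p₂ * expVal M₂ ψ₂ + p₃ * expVal M₃ ψ₃)
    ∧ expVal M₃ ψ₃ = 0 := by
  subst ψ₁ ψ₂ ψ₃ p₂ p₃ M₁ M₂ M₃
  have hs : Real.sqrt 3 * Real.sqrt 3 = 3 := Real.mul_self_sqrt (by norm_num)
  have hs1 : 1 < Real.sqrt 3 := by nlinarith [Real.sqrt_nonneg 3]
  have hp₁ : 0 < p₁ := by rw [hp1]; positivity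
  have hp₃ : 1 - 2 * p₁ = p₁ * (Real.sqrt 3 / 2 + 1 / 2) * (Real.sqrt 3 / 2) := by
    rw [hp1]; field_simp; linear_combination -4 * hs
  refine ⟨⟨by nlinarith, by nlinarith⟩, ⟨isPOVM_hadamard, fun N hN => ?_⟩, expVal_zero _⟩
  have h := hadamard_measurement_optimal (by positivity) (by norm_num) hp₁.le hp₃.le hN
  push_cast at h
  exact h
end
end

section
/- Let ψ₁,…,ψ_m be unit vectors in ℂ^d with priors p_k ≥ 0, Σ p_k = 1, and let (M_k) be a POVM on ℂ^d. Define L := Σ_k p_k M_k |ψ_k⟩⟨ψ_k| and H := (L + L†)/2. If H − p_k |ψ_k⟩⟨ψ_k| is positive semidefinite for every k, then (M_k) is optimal: for every POVM (N_k) on ℂ^d, Σ_k p_k ⟨ψ_k, M_k ψ_k⟩ ≥ Σ_k p_k ⟨ψ_k, N_k ψ_k⟩. -/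
open Matrix Filter
open scoped ComplexOrder

noncomputable section

/-!
Holevo's condition is a dual certificate. For any POVM `(N k)`, pairing the positive
semidefinite matrices `H - p k • |ψ k⟩⟨ψ k|` and `N k` gives a nonnegative trace, so
`p k ⟨ψ k, N k ψ k⟩ ≤ Re tr (H N k)`. Summing over `k` and using `∑ k, N k = 1` bounds the
success probability of `N` by `Re tr H = Re tr L`, which is exactly the success probability
of `M`.
-/

namespace Matrix.PosSemidef

variable {𝕜 n : Type*} [RCLike 𝕜] [Fintype n]

theorem trace_mul_nonneg_s13 {A B : Matrix n n 𝕜} (hA : A.PosSemidef) (hB : B.PosSemidef) :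
    0 ≤ (A * B).trace := by
  classical
  open scoped MatrixOrder in
  obtain ⟨C, rfl⟩ := CStarAlgebra.nonneg_iff_eq_star_mul_self.mp hB.nonneg
  rw [star_eq_conjTranspose, ← Matrix.mul_assoc, trace_mul_comm, ← Matrix.mul_assoc]
  exact (hA.mul_mul_conjTranspose_same C).trace_nonneg

end Matrix.PosSemidef

section

variable {d : ℕ}

theorem re_trace_mul_proj (A : Matrix (Fin d) (Fin d) ℂ) (ψ : Fin d → ℂ) :
    (trace (A * proj ψ)).re = expVal A ψ := by
  rw [proj, mul_vecMulVec, trace_vecMulVec, dotProduct_comm, expVal]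

theorem mul_expVal_le_re_trace_mul {H N : Matrix (Fin d) (Fin d) ℂ} {ψ : Fin d → ℂ} {c : ℝ}
    (hH : (H - c • proj ψ).PosSemidef) (hN : N.PosSemidef) :
    c * expVal N ψ ≤ (trace (H * N)).re := by
  have h := Complex.nonneg_iff.mp (hH.trace_mul_nonneg_s13 hN) |>.1
  rw [Matrix.sub_mul, trace_sub, Complex.sub_re, Matrix.smul_mul, trace_smul, Complex.smul_re,
    trace_mul_comm (proj ψ), re_trace_mul_proj] at h
  simpa using h

theorem re_trace_smul_add_conjTranspose (L : Matrix (Fin d) (Fin d) ℂ) :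
    (trace ((2 : ℂ)⁻¹ • (L + Lᴴ))).re = (trace L).re := by
  rw [trace_smul, trace_add, trace_conjTranspose, smul_eq_mul, Complex.mul_re, Complex.add_re,
    Complex.add_im, Complex.star_def, Complex.conj_re, Complex.conj_im]
  norm_num
  ring

end

theorem lagrange_condition_implies_optimal_general {d m : ℕ}
    (ψ : Fin m → Fin d → ℂ)
    (p : Fin m → ℝ)
    (M : Fin m → Matrix (Fin d) (Fin d) ℂ)
    (L H : Matrix (Fin d) (Fin d) ℂ)
    (hL : L = ∑ k, p k • (M k * proj (ψ k)))
    (hH : H = (2:ℂ)⁻¹ • (L + Lᴴ))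
    (hcond : ∀ k, (H - p k • proj (ψ k)).PosSemidef) :
    ∀ N : Fin m → Matrix (Fin d) (Fin d) ℂ, IsPOVM N →
      ∑ k, p k * expVal (N k) (ψ k) ≤ ∑ k, p k * expVal (M k) (ψ k) := by
  rintro N ⟨hN, hN_sum⟩
  calc ∑ k, p k * expVal (N k) (ψ k)
      ≤ ∑ k, (trace (H * N k)).re :=
        Finset.sum_le_sum fun k _ => mul_expVal_le_re_trace_mul (hcond k) (hN k)
    _ = (trace L).re := by
        rw [← Complex.re_sum, ← trace_sum, ← Finset.mul_sum, hN_sum, mul_one, hH,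
          re_trace_smul_add_conjTranspose]
    _ = ∑ k, p k * expVal (M k) (ψ k) := by
        simp only [hL, trace_sum, Complex.re_sum, trace_smul, Complex.smul_re, re_trace_mul_proj,
          smul_eq_mul]

/-- Holevo's sufficient optimality condition: if
`H := (L + L†)/2` with `L := ∑ k, p k • (M k * |ψ k⟩⟨ψ k|)` satisfies
`H − p k • |ψ k⟩⟨ψ k| ≥ 0` for all `k`, then the POVM `(M k)` is optimal. -/
theorem lagrange_condition_implies_optimal {d m : ℕ}
    (ψ : Fin m → Fin d → ℂ) (hψ : ∀ k, star (ψ k) ⬝ᵥ ψ k = 1)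
    (p : Fin m → ℝ) (hp : ∀ k, 0 ≤ p k) (hp1 : ∑ k, p k = 1)
    (M : Fin m → Matrix (Fin d) (Fin d) ℂ) (hM : IsPOVM M)
    (L H : Matrix (Fin d) (Fin d) ℂ)
    (hL : L = ∑ k, p k • (M k * proj (ψ k)))
    (hH : H = (2:ℂ)⁻¹ • (L + Lᴴ))
    (hcond : ∀ k, (H - p k • proj (ψ k)).PosSemidef) :
    ∀ N : Fin m → Matrix (Fin d) (Fin d) ℂ, IsPOVM N →
      ∑ k, p k * expVal (N k) (ψ k) ≤ ∑ k, p k * expVal (M k) (ψ k) :=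
  lagrange_condition_implies_optimal_general ψ p M L H hL hH hcond
end
end
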